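/- Let $m, n, I$ be positive reals with $I \le mn$, and define $s_0 = \frac{I^2}{m^2 n}$. If $I \ge C (m n^{3/4} + n m^{2/3})$ for a sufficiently large constant $C$, then for every real $t$ with $1 \le t \le s_0$ we have $t \left[ \left(\frac{mn}{t}\right)^{4/5} + \frac{n}{t} m^{2/3} \right] < I$. -/

import Mathlib

/-- Arithmetic core of Step 3 (5D): if `I ≥ C(m n^{3/4} + n m^{2/3})` for
sufficiently large `C`, then for all `1 ≤ t ≤ s₀ = I²/(m²n)` we have
`t[(mn/t)^{4/5} + (n/t) m^{2/3}] < I`. -/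
theorem stmt_7 :
    ∃ C₀ : ℝ, 0 < C₀ ∧
      ∀ C m n I : ℝ, C₀ ≤ C → 0 < m → 0 < n → 0 < I → I ≤ m * n →
        C * (m * n ^ ((3 : ℝ) / 4) + n * m ^ ((2 : ℝ) / 3)) ≤ I →
        ∀ t : ℝ, 1 ≤ t → t ≤ I ^ (2 : ℕ) / (m ^ (2 : ℕ) * n) →
          t * ((m * n / t) ^ ((4 : ℝ) / 5) + n / t * m ^ ((2 : ℝ) / 3)) < I := by
  refine ⟨32, by norm_num, ?_⟩
  intro C m n I hC hm hn hI hImn hCI t ht1 hts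
  have ht0 : (0 : ℝ) < t := lt_of_lt_of_le one_pos ht1
  have hmnt : (0 : ℝ) ≤ m * n / t := by positivity
  have hb0 : (0 : ℝ) < n * m ^ ((2 : ℝ) / 3) := by positivity
  have ha0 : (0 : ℝ) < m * n ^ ((3 : ℝ) / 4) := by positivity
  -- 32 * b < I where b = n * m^{2/3}
  have hbI : 32 * (n * m ^ ((2 : ℝ) / 3)) < I := by nlinarith
  set a := t * (m * n / t) ^ ((4 : ℝ) / 5) with ha
  have ha0' : 0 ≤ a := by positivity
  -- a ^ 5 = t * (m*n)^4
  have h5 : a ^ (5 : ℕ) = t * (m * n) ^ (4 : ℕ) := by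
    rw [ha, mul_pow, ← Real.rpow_natCast ((m * n / t) ^ ((4 : ℝ) / 5)) 5,
      ← Real.rpow_mul hmnt]
    norm_num
    field_simp
  -- b ^ 3 = n^3 * m^2
  have hb3 : (n * m ^ ((2 : ℝ) / 3)) ^ (3 : ℕ) = n ^ (3 : ℕ) * m ^ (2 : ℕ) := by
    rw [mul_pow, ← Real.rpow_natCast (m ^ ((2 : ℝ) / 3)) 3, ← Real.rpow_mul hm.le]
    norm_num
  -- a^5 ≤ m^2 n^3 I^2
  have h6 : a ^ (5 : ℕ) ≤ m ^ (2 : ℕ) * n ^ (3 : ℕ) * I ^ (2 : ℕ) := by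
    rw [h5]
    have := mul_le_mul_of_nonneg_right hts (by positivity : (0 : ℝ) ≤ (m * n) ^ (4 : ℕ))
    calc t * (m * n) ^ (4 : ℕ) ≤ I ^ (2:ℕ) / (m ^ (2:ℕ) * n) * (m * n) ^ (4 : ℕ) := this
      _ = m ^ (2 : ℕ) * n ^ (3 : ℕ) * I ^ (2 : ℕ) := by field_simp
  -- (32 b)^3 < I^3
  have h7 : (32 * (n * m ^ ((2 : ℝ) / 3))) ^ (3 : ℕ) < I ^ (3 : ℕ) :=
    pow_lt_pow_left₀ hbI (by positivity) (by norm_num)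
  have h8 : 32768 * (n ^ (3:ℕ) * m ^ (2:ℕ)) < I ^ (3 : ℕ) := by
    have := h7
    rw [mul_pow, hb3] at this
    norm_num at this
    linarith
  -- a^5 < (I/4)^5
  have hI2 : (0:ℝ) < I ^ (2:ℕ) := by positivity
  have hx0 : (0:ℝ) < m ^ (2:ℕ) * n ^ (3:ℕ) * I ^ (2:ℕ) := by positivity
  have h10 : 32768 * (m ^ (2:ℕ) * n ^ (3:ℕ) * I ^ (2:ℕ)) < I ^ (5:ℕ) := by
    nlinarith [mul_lt_mul_of_pos_right h8 hI2]
  have h9 : a ^ (5 : ℕ) < (I / 4) ^ (5 : ℕ) := by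
    have he : ((I / 4 : ℝ)) ^ (5:ℕ) = I ^ (5:ℕ) / 1024 := by ring
    rw [he]; linarith
  have haI : a < I / 4 := lt_of_pow_lt_pow_left₀ 5 (by positivity) h9
  have hbI' : n * m ^ ((2 : ℝ) / 3) < I / 32 := by linarith
  have hsplit : t * ((m * n / t) ^ ((4 : ℝ) / 5) + n / t * m ^ ((2 : ℝ) / 3))
      = a + n * m ^ ((2 : ℝ) / 3) := by
    rw [ha]; field_simp
  rw [hsplit]
  linarith
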